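/- Let H be an infinite finitely generated group with word metric d_H. Then the combinatorial horoballs C_f(H) with f(n) = 2^n and C_g(H) with g(n) = 2^(2^n) are not quasi-isometric by any map that sends the level-0 set into a bounded-height neighborhood of the level-0 set and sends vertical rays to vertical rays. -/

import Mathlib

/-- The combinatorial horoball over a graph `Γ` with scaling function `f`. -/
def horoball {V : Type*} (Γ : SimpleGraph V) (f : ℕ → ℕ) : SimpleGraph (V × ℕ) :=
  SimpleGraph.fromRel (fun a b =>
    (a.1 = b.1 ∧ b.2 = a.2 + 1) ∨ (a.2 = b.2 ∧ Γ.dist a.1 b.1 ≤ f a.2))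

/-- The Cayley graph of a group with respect to a generating set. -/
def cayley (H : Type*) [Group H] (S : Set H) : SimpleGraph H :=
  SimpleGraph.fromRel (fun a b => a⁻¹ * b ∈ S)

/-!
Points at word distance `ℓ` on level `0` are roughly `log ℓ` apart in the horoball for `2 ^ n`,
but only roughly `log log ℓ` apart in the horoball for `2 ^ 2 ^ n`. A quasi-isometry keeping
level `0` at bounded height is Lipschitz on level `0` for the word metric, so it keeps the images
of such points at word distance `O(ℓ)`, hence at horoball distance `O(log log ℓ)`; the lower
quasi-isometry bound then gives `log ℓ = O(log log ℓ)`, impossible since an infinite finitely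
generated group contains points arbitrarily far apart.
-/

open SimpleGraph Filter Pointwise

lemma eventually_mul_add_lt_two_pow (a b : ℕ) : ∀ᶠ u in atTop, a * u + b < 2 ^ u := by
  refine eventually_atTop.2 ⟨2 * (a + b) + 4, fun u hu => ?_⟩
  induction u, hu using Nat.le_induction with
  | base =>
    have h := Nat.lt_two_pow_self (n := a + b)
    rw [show 2 * (a + b) + 4 = (a + b) + (a + b) + 4 by ring, pow_add, pow_add]
    nlinarith
  | succ u hu ih =>
    have : a < 2 ^ u := (by omega : a < u).trans Nat.lt_two_pow_self
    rw [pow_succ, mul_add_one]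
    omega

lemma eventually_mul_clog_add_lt (a b : ℕ) : ∀ᶠ t in atTop, a * Nat.clog 2 t + b < t := by
  obtain ⟨N, hN⟩ := eventually_atTop.1 (eventually_mul_add_lt_two_pow (2 * a) (2 * b))
  refine eventually_atTop.2 ⟨2 ^ (N + 1), fun t ht => ?_⟩
  have hu : N + 1 ≤ Nat.clog 2 t := by
    simpa [Nat.clog_pow _ _ one_lt_two] using Nat.clog_mono_right 2 ht
  have ht2 : 1 < t := lt_of_lt_of_le (Nat.one_lt_two_pow (by omega)) ht
  have hlt : 2 ^ (Nat.clog 2 t - 1) < t := Nat.pow_pred_clog_lt_self one_lt_two ht2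
  have hpow : 2 ^ Nat.clog 2 t = 2 * 2 ^ (Nat.clog 2 t - 1) := by
    rw [← pow_succ']; congr 1; omega
  have := hN _ (by omega : N ≤ Nat.clog 2 t)
  rw [mul_assoc] at this
  omega

lemma exists_nat_affine_bounds {c : ℝ} (hc : 0 < c) : ∃ K : ℕ, ∀ x y : ℕ,
    ((1 / c) * x - c ≤ y → x ≤ K * y + K) ∧ ((y : ℝ) ≤ c * x + c → y ≤ K * x + K) := by
  refine ⟨⌈c + c ^ 2⌉₊, fun x y => ⟨fun h => ?_, fun h => ?_⟩⟩ <;>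
    have hK := Nat.le_ceil (c + c ^ 2)
  · have hx : (x : ℝ) ≤ c * y + c ^ 2 := by
      have := mul_le_mul_of_nonneg_left h hc.le
      field_simp at this
      nlinarith
    have : (x : ℝ) ≤ ⌈c + c ^ 2⌉₊ * y + ⌈c + c ^ 2⌉₊ := by
      nlinarith [sq_nonneg c, (Nat.cast_nonneg y : (0 : ℝ) ≤ y)]
    exact_mod_cast this
  · have : (y : ℝ) ≤ ⌈c + c ^ 2⌉₊ * x + ⌈c + c ^ 2⌉₊ := by
      nlinarith [sq_nonneg c, (Nat.cast_nonneg x : (0 : ℝ) ≤ x)]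
    exact_mod_cast this

namespace SimpleGraph

variable {V W : Type*} {G : SimpleGraph V} {G' : SimpleGraph W}

lemma Connected.dist_le_mul_dist_of_adj (hG' : G'.Connected) {g : V → W} {P : ℕ}
    (hg : ∀ x y, G.Adj x y → G'.dist (g x) (g y) ≤ P) {a b : V} (hab : G.Reachable a b) :
    G'.dist (g a) (g b) ≤ P * G.dist a b := by
  obtain ⟨p, hp⟩ := hab.exists_walk_length_eq_dist
  rw [← hp]
  clear hp hab
  induction p with
  | nil => simp
  | @cons x y b hxy q ih =>
    have := hg x y hxy
    have := hG'.dist_triangle (u := g x) (v := g y) (w := g b)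
    rw [Walk.length_cons, mul_add_one]
    omega

end SimpleGraph

section Horoball

variable {V : Type*} {Γ : SimpleGraph V} {f : ℕ → ℕ}

lemma horoball_adj_up (a : V) (n : ℕ) : (horoball Γ f).Adj (a, n) (a, n + 1) := by
  simp [horoball, fromRel_adj]

lemma horoball_adj_of_dist_le {a b : V} (hab : a ≠ b) {n : ℕ} (h : Γ.dist a b ≤ f n) :
    (horoball Γ f).Adj (a, n) (b, n) := by
  simp [horoball, fromRel_adj, hab, h]

lemma horoball_adj_dist_fst_le {u v : V × ℕ} (huv : (horoball Γ f).Adj u v) :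
    Γ.dist u.1 v.1 ≤ f u.2 ∧ v.2 ≤ u.2 + 1 := by
  rw [horoball, fromRel_adj] at huv
  rcases huv.2 with (⟨h1, h2⟩ | ⟨h1, h2⟩) | (⟨h1, h2⟩ | ⟨h1, h2⟩)
  · simp [h1, h2]
  · exact ⟨h2, by omega⟩
  · rw [h1, SimpleGraph.dist_self]
    exact ⟨Nat.zero_le _, by omega⟩
  · rw [SimpleGraph.dist_comm, ← h1]
    exact ⟨h2, by omega⟩

lemma horoball_exists_walk_up (a : V) (i k : ℕ) :
    ∃ p : (horoball Γ f).Walk (a, i) (a, i + k), p.length = k := by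
  induction k with
  | zero => exact ⟨.nil, rfl⟩
  | succ k ih =>
    obtain ⟨p, hp⟩ := ih
    exact ⟨p.concat (horoball_adj_up a (i + k)), by simp [hp]⟩

lemma horoball_exists_walk_vertical (a : V) (i j : ℕ) :
    ∃ p : (horoball Γ f).Walk (a, i) (a, j), p.length = i - j + (j - i) := by
  rcases le_total i j with h | h
  · obtain ⟨p, hp⟩ := horoball_exists_walk_up (Γ := Γ) (f := f) a i (j - i)
    exact ⟨p.copy rfl (by rw [Nat.add_sub_cancel' h]), by rw [Walk.length_copy, hp]; omega⟩
  · obtain ⟨p, hp⟩ := horoball_exists_walk_up (Γ := Γ) (f := f) a j (i - j)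
    exact ⟨(p.copy rfl (by rw [Nat.add_sub_cancel' h])).reverse,
      by rw [Walk.length_reverse, Walk.length_copy, hp]; omega⟩

lemma horoball_exists_walk_length_le {a b : V} {n : ℕ} (hd : Γ.dist a b ≤ f n) (h h' : ℕ) :
    ∃ p : (horoball Γ f).Walk (a, h) (b, h'), p.length ≤ h + h' + 2 * n + 1 := by
  obtain ⟨p, hp⟩ := horoball_exists_walk_vertical (Γ := Γ) (f := f) a h n
  obtain ⟨q, hq⟩ := horoball_exists_walk_vertical (Γ := Γ) (f := f) b n h'
  by_cases hab : a = b
  · subst hab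
    exact ⟨p.append q, by simp [hp, hq]; omega⟩
  · exact ⟨p.append (.cons (horoball_adj_of_dist_le hab hd) q), by simp [hp, hq]; omega⟩

lemma horoball_dist_le_of_dist_le {a b : V} {n : ℕ} (hd : Γ.dist a b ≤ f n) (h h' : ℕ) :
    (horoball Γ f).dist (a, h) (b, h') ≤ h + h' + 2 * n + 1 :=
  let ⟨p, hp⟩ := horoball_exists_walk_length_le hd h h'
  (dist_le p).trans hp

lemma horoball_reachable (hf : ∀ n, n ≤ f n) (u v : V × ℕ) : (horoball Γ f).Reachable u v :=
  let ⟨p, _⟩ := horoball_exists_walk_length_le (hf (Γ.dist u.1 v.1)) u.2 v.2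
  ⟨p⟩

lemma horoball_walk_dist_fst_le (hΓ : Γ.Connected) (hf : Monotone f) {u v : V × ℕ}
    (p : (horoball Γ f).Walk u v) : Γ.dist u.1 v.1 ≤ p.length * f (u.2 + p.length) := by
  induction p with
  | nil => simp
  | @cons u w v huw q ih =>
    obtain ⟨hstep, hlevel⟩ := horoball_adj_dist_fst_le huw
    have h1 : f u.2 ≤ f (u.2 + (q.length + 1)) := hf (by omega)
    have h2 : f (w.2 + q.length) ≤ f (u.2 + (q.length + 1)) := hf (by omega)
    calc Γ.dist u.1 v.1 ≤ Γ.dist u.1 w.1 + Γ.dist w.1 v.1 := hΓ.dist_triangle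
      _ ≤ f (u.2 + (q.length + 1)) + q.length * f (u.2 + (q.length + 1)) := by
        gcongr
        exacts [hstep.trans h1, ih.trans (Nat.mul_le_mul_left _ h2)]
      _ = (q.cons huw).length * f (u.2 + (q.cons huw).length) := by
        rw [Walk.length_cons]; ring

lemma horoball_dist_fst_le (hΓ : Γ.Connected) (hf : Monotone f) {u v : V × ℕ}
    (huv : (horoball Γ f).Reachable u v) :
    Γ.dist u.1 v.1 ≤ (horoball Γ f).dist u v * f (u.2 + (horoball Γ f).dist u v) := by
  obtain ⟨p, hp⟩ := huv.exists_walk_length_eq_dist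
  exact hp ▸ horoball_walk_dist_fst_le hΓ hf p

end Horoball

lemma Set.Finite.pow {M : Type*} [Monoid M] {s : Set M} (hs : s.Finite) (n : ℕ) :
    (s ^ n).Finite := by
  induction n with
  | zero => simp
  | succ n ih => rw [pow_succ]; exact ih.mul hs

section Cayley

variable {H : Type*} [Group H] {S : Set H}

lemma cayley_reachable_mul (x : H) {s : H} (hs : s ∈ S) : (cayley H S).Reachable x (x * s) := by
  by_cases h : x = x * s
  · rw [← h]
  · exact Adj.reachable (by simp [cayley, fromRel_adj, h, hs])

lemma cayley_connected (hgen : Subgroup.closure S = ⊤) : (cayley H S).Connected := by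
  have hone : ∀ z, (cayley H S).Reachable 1 z := fun z => by
    induction (hgen ▸ Subgroup.mem_top z : z ∈ Subgroup.closure S)
      using Subgroup.closure_induction_right with
    | one => rfl
    | mul_right x _ y hy ih => exact ih.trans (cayley_reachable_mul x hy)
    | mul_inv_cancel x _ y hy ih =>
      exact ih.trans (by simpa using (cayley_reachable_mul (x * y⁻¹) hy).symm)
  exact (connected_iff _).2 ⟨fun u v => (hone u).symm.trans (hone v), ⟨1⟩⟩

lemma cayley_walk_mem_pow {a b : H} (p : (cayley H S).Walk a b) :
    a⁻¹ * b ∈ (S ∪ S⁻¹) ^ p.length := by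
  induction p with
  | nil => simp
  | @cons a w b haw q ih =>
    have hstep : a⁻¹ * w ∈ S ∪ S⁻¹ := by
      rw [cayley, fromRel_adj] at haw
      simpa [Set.mem_inv] using haw.2
    rw [Walk.length_cons, pow_succ', show a⁻¹ * b = (a⁻¹ * w) * (w⁻¹ * b) by group]
    exact Set.mul_mem_mul hstep ih

lemma cayley_exists_lt_dist [Infinite H] (hS : S.Finite) (hgen : Subgroup.closure S = ⊤)
    (r : ℕ) : ∃ z : H, r < (cayley H S).dist 1 z := by
  obtain ⟨z, hz⟩ := ((hS.union hS.inv).insert 1 |>.pow r).infinite_compl.nonempty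
  refine ⟨z, lt_of_not_ge fun hle => hz ?_⟩
  obtain ⟨p, hp⟩ := (cayley_connected hgen).exists_walk_length_eq_dist 1 z
  have hmem := Set.pow_subset_pow_left (Set.subset_insert 1 _) (cayley_walk_mem_pow p)
  simpa using Set.pow_subset_pow_right (Set.mem_insert 1 _) (hp ▸ hle) hmem

end Cayley

section LevelZero

variable {V : Type*} {Γ : SimpleGraph V}

lemma exists_dist_fst_le_mul_dist {f g : ℕ → ℕ} (hΓ : Γ.Connected) (hf : 1 ≤ f 0)
    (hg : Monotone g) (hg' : ∀ n, n ≤ g n) {ψ : V → V × ℕ} {K E : ℕ}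
    (hlev : ∀ x, (ψ x).2 ≤ E)
    (hup : ∀ a b, (horoball Γ g).dist (ψ a) (ψ b) ≤ K * (horoball Γ f).dist (a, 0) (b, 0) + K) :
    ∃ P, ∀ a b, Γ.dist (ψ a).1 (ψ b).1 ≤ P * Γ.dist a b := by
  refine ⟨2 * K * g (E + 2 * K), fun a b =>
    hΓ.dist_le_mul_dist_of_adj (g := fun x => (ψ x).1) (fun x y hxy => ?_) (hΓ a b)⟩
  have hF : (horoball Γ f).dist (x, 0) (y, 0) ≤ 1 := by
    have hadj := horoball_adj_of_dist_le hxy.ne ((dist_eq_one_iff_adj.2 hxy).trans_le hf)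
    simpa using dist_le hadj.toWalk
  have hG : (horoball Γ g).dist (ψ x) (ψ y) ≤ 2 * K := by
    have := hup x y
    nlinarith
  calc Γ.dist (ψ x).1 (ψ y).1
      ≤ (horoball Γ g).dist (ψ x) (ψ y) * g ((ψ x).2 + (horoball Γ g).dist (ψ x) (ψ y)) :=
        horoball_dist_fst_le hΓ hg (horoball_reachable hg' _ _)
    _ ≤ 2 * K * g (E + 2 * K) := by
        gcongr
        exact hg (by gcongr; exact hlev x)

lemma dist_le_two_pow_horoball_dist (hΓ : Γ.Connected) (a b : V) :
    Γ.dist a b ≤ 2 ^ (2 * (horoball Γ fun n => 2 ^ n).dist (a, 0) (b, 0)) := by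
  set m := (horoball Γ fun n => 2 ^ n).dist (a, 0) (b, 0)
  calc Γ.dist a b ≤ m * 2 ^ (0 + m) :=
        horoball_dist_fst_le (u := (a, 0)) (v := (b, 0)) hΓ
          (fun _ _ h => Nat.pow_le_pow_right two_pos h)
          (horoball_reachable (fun n => Nat.lt_two_pow_self.le) _ _)
    _ ≤ 2 ^ m * 2 ^ m := by rw [zero_add]; gcongr; exact Nat.lt_two_pow_self.le
    _ = 2 ^ (2 * m) := by rw [← pow_add, two_mul]

lemma false_of_levelZero_quasiIsometry (hΓ : Γ.Connected)
    (hunbdd : ∀ r, ∃ a b, r < Γ.dist a b) {ψ : V → V × ℕ} {K E : ℕ}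
    (hlev : ∀ x, (ψ x).2 ≤ E)
    (hup : ∀ a b, (horoball Γ fun n => 2 ^ 2 ^ n).dist (ψ a) (ψ b) ≤
      K * (horoball Γ fun n => 2 ^ n).dist (a, 0) (b, 0) + K)
    (hlow : ∀ a b, (horoball Γ fun n => 2 ^ n).dist (a, 0) (b, 0) ≤
      K * (horoball Γ fun n => 2 ^ 2 ^ n).dist (ψ a) (ψ b) + K) :
    False := by
  have hexp : Monotone fun n : ℕ => 2 ^ n := fun _ _ h => Nat.pow_le_pow_right two_pos h
  have hexp2 : Monotone fun n : ℕ => 2 ^ 2 ^ n := fun _ _ h => hexp (hexp h)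
  have hle_exp2 : ∀ n : ℕ, n ≤ 2 ^ 2 ^ n := fun n =>
    Nat.lt_two_pow_self.le.trans (hexp Nat.lt_two_pow_self.le)
  obtain ⟨P, hP⟩ := exists_dist_fst_le_mul_dist hΓ le_rfl hexp2 hle_exp2 hlev hup
  obtain ⟨T, hT⟩ := eventually_atTop.1
    (eventually_mul_clog_add_lt (4 * K) (2 * K * (2 * E + 1) + 2 * K + Nat.clog 2 P))
  obtain ⟨a, b, hab⟩ := hunbdd (2 ^ T)
  set m := (horoball Γ fun n => 2 ^ n).dist (a, 0) (b, 0)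
  set k := (horoball Γ fun n => 2 ^ 2 ^ n).dist (ψ a) (ψ b)
  set s := 2 * m + Nat.clog 2 P
  have hdom : Γ.dist a b ≤ 2 ^ (2 * m) := dist_le_two_pow_horoball_dist hΓ a b
  have himage : Γ.dist (ψ a).1 (ψ b).1 ≤ 2 ^ 2 ^ Nat.clog 2 s :=
    calc Γ.dist (ψ a).1 (ψ b).1 ≤ P * Γ.dist a b := hP a b
      _ ≤ 2 ^ Nat.clog 2 P * 2 ^ (2 * m) := by gcongr; exact Nat.le_pow_clog one_lt_two P
      _ = 2 ^ s := by rw [← pow_add, add_comm]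
      _ ≤ 2 ^ 2 ^ Nat.clog 2 s := hexp (Nat.le_pow_clog one_lt_two s)
  have hk : k ≤ 2 * E + 2 * Nat.clog 2 s + 1 := by
    have hk' : k ≤ (ψ a).2 + (ψ b).2 + 2 * Nat.clog 2 s + 1 :=
      horoball_dist_le_of_dist_le (f := fun n => 2 ^ 2 ^ n) himage (ψ a).2 (ψ b).2
    have := hlev a
    have := hlev b
    omega
  have hs : s ≤ 4 * K * Nat.clog 2 s + (2 * K * (2 * E + 1) + 2 * K + Nat.clog 2 P) :=
    calc s ≤ 2 * (K * k + K) + Nat.clog 2 P := by have hm : m ≤ K * k + K := hlow a b; omega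
      _ ≤ 2 * (K * (2 * E + 2 * Nat.clog 2 s + 1) + K) + Nat.clog 2 P := by gcongr
      _ = _ := by ring
  have hTs : T ≤ s := by
    have : 2 ^ T < 2 ^ s := hab.trans_le (hdom.trans (hexp (by omega)))
    exact ((Nat.pow_lt_pow_iff_right (by norm_num)).1 this).le
  exact (hT s hTs).not_ge hs

end LevelZero

/-- For an infinite finitely generated group `H`, the combinatorial horoballs with
scaling functions `2^n` and `2^(2^n)` are not quasi-isometric by any map sending the
level-0 set into a bounded-height region and vertical rays to vertical rays. -/
theorem horoballs_not_quasi_isometric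
    (H : Type) [Group H] [Infinite H] (S : Set H) (hS : S.Finite)
    (hgen : Subgroup.closure S = ⊤) :
    ¬ ∃ (φ : H × ℕ → H × ℕ) (c D : ℝ), 0 < c ∧ 0 ≤ D ∧
      (∀ a b : H × ℕ,
        (1 / c) * ((horoball (cayley H S) (fun n => 2 ^ n)).dist a b : ℝ) - c ≤
          ((horoball (cayley H S) (fun n => 2 ^ 2 ^ n)).dist (φ a) (φ b) : ℝ) ∧
        ((horoball (cayley H S) (fun n => 2 ^ 2 ^ n)).dist (φ a) (φ b) : ℝ) ≤
          c * ((horoball (cayley H S) (fun n => 2 ^ n)).dist a b : ℝ) + c) ∧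
      (∀ b : H × ℕ, ∃ a : H × ℕ,
        ((horoball (cayley H S) (fun n => 2 ^ 2 ^ n)).dist (φ a) b : ℝ) ≤ c) ∧
      (∀ x : H, ((φ (x, 0)).2 : ℝ) ≤ D) ∧
      (∀ x : H, ∃ y : H, ∀ i : ℕ, (φ (x, i)).1 = y) := by
  rintro ⟨φ, c, D, hc, -, hqi, -, hlev, -⟩
  obtain ⟨K, hK⟩ := exists_nat_affine_bounds hc
  exact false_of_levelZero_quasiIsometry (cayley_connected hgen)
    (fun r => ⟨1, cayley_exists_lt_dist hS hgen r⟩) (ψ := fun x => φ (x, 0)) (E := ⌈D⌉₊)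
    (fun x => by exact_mod_cast (hlev x).trans (Nat.le_ceil D))
    (fun _ _ => (hK _ _).2 (hqi _ _).2) (fun _ _ => (hK _ _).1 (hqi _ _).1)
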